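/- arXiv:2505.04395 — 3 statements merged into one kernel-verified Lean document; each statement's English description precedes it below -/
import Mathlib

section
/- Let n, d be positive integers with gcd(n, d) = 1, let r be an integer with gcd(r, d) = 1, and let m be the unique integer with 0 ≤ m < n and d·m + r ≡ 0 (mod n). Then there exist polynomials A, B ∈ ℚ[q] with B coprime to q^n − 1 such that, in ℚ(q), (q^r; q^d)_m · (q^{r+(m+1)d}; q^d)_m / (q^d; q^d)_m^2 = A/B. -/
open Finset Polynomial

/-- The variable `q` in the field `ℚ(q)` of rational functions. -/
noncomputable def q : RatFunc ℚ := RatFunc.X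

/-- The `q`-integer `[k] = (1 - q^k)/(1 - q)` for an integer `k`. -/
noncomputable def qint (k : ℤ) : RatFunc ℚ := (1 - q ^ k) / (1 - q)

/-- The `q`-shifted factorial `(a; q^d)_k = ∏_{j=0}^{k-1} (1 - a q^{d j})`. -/
noncomputable def qpoch (a : RatFunc ℚ) (d k : ℕ) : RatFunc ℚ :=
  ∏ j ∈ Finset.range k, (1 - a * q ^ (d * j))

/-- `f ≡ g (mod P)` in `ℚ(q)`: `f - g = P · (A/B)` with `A, B ∈ ℚ[q]`, `B` coprime to `P`. -/
def qcong (f g : RatFunc ℚ) (P : Polynomial ℚ) : Prop :=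
  ∃ A B : Polynomial ℚ, IsCoprime B P ∧
    f - g = algebraMap (Polynomial ℚ) (RatFunc ℚ) P *
      (algebraMap (Polynomial ℚ) (RatFunc ℚ) A / algebraMap (Polynomial ℚ) (RatFunc ℚ) B)

/-- f is expressible as A/B with B coprime to X^n - 1 -/
def good (n : ℕ) (f : RatFunc ℚ) : Prop :=
  ∃ A B : Polynomial ℚ, IsCoprime B (Polynomial.X ^ n - 1) ∧
    f = algebraMap (Polynomial ℚ) (RatFunc ℚ) A / algebraMap (Polynomial ℚ) (RatFunc ℚ) B

lemma good_one (n : ℕ) : good n 1 := ⟨1, 1, isCoprime_one_left, by simp⟩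

lemma good_mul {n : ℕ} {f g : RatFunc ℚ} (hf : good n f) (hg : good n g) :
    good n (f * g) := by
  obtain ⟨A1, B1, h1, e1⟩ := hf
  obtain ⟨A2, B2, h2, e2⟩ := hg
  exact ⟨A1 * A2, B1 * B2, h1.mul_left h2, by
    rw [e1, e2, map_mul, map_mul, div_mul_div_comm]⟩

lemma good_prod {n : ℕ} {s : Finset ℕ} {f : ℕ → RatFunc ℚ}
    (h : ∀ i ∈ s, good n (f i)) : good n (∏ i ∈ s, f i) :=
  Finset.prod_induction f (good n) (fun _ _ => good_mul) (good_one n) h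

lemma cop_X (n : ℕ) (hn : 0 < n) : IsCoprime (X : Polynomial ℚ) (X ^ n - 1) :=
  ⟨X ^ (n - 1), -1, by rw [← pow_succ, Nat.sub_add_cancel hn]; ring⟩

lemma coprime_geom (n g k : ℕ) (hn : 0 < n) (hg : 0 < g) (hk : 0 < k)
    (H : ∀ e : ℕ, e ∣ n → e ∣ g * k → e ∣ g) :
    IsCoprime (∑ i ∈ Finset.range k, ((X : Polynomial ℚ) ^ g) ^ i) (X ^ n - 1) := by
  set B : Polynomial ℚ := ∑ i ∈ Finset.range k, ((X : Polynomial ℚ) ^ g) ^ i with hB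
  rw [← Polynomial.isCoprime_map (algebraMap ℚ ℂ)]
  by_contra hcop
  rw [← EuclideanDomain.gcd_isUnit_iff] at hcop
  set p := EuclideanDomain.gcd (B.map (algebraMap ℚ ℂ)) ((X ^ n - 1 : Polynomial ℚ).map (algebraMap ℚ ℂ))
  obtain ⟨z, hz⟩ := IsAlgClosed.exists_root p
    (fun h => hcop (Polynomial.isUnit_iff_degree_eq_zero.mpr h))
  have hzB : (B.map (algebraMap ℚ ℂ)).IsRoot z := hz.dvd (EuclideanDomain.gcd_dvd_left _ _)
  have hzP : (((X : Polynomial ℚ) ^ n - 1).map (algebraMap ℚ ℂ)).IsRoot z :=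
    hz.dvd (EuclideanDomain.gcd_dvd_right _ _)
  have hzn : z ^ n = 1 := by
    have := hzP
    simp [Polynomial.IsRoot, sub_eq_zero] at this
    exact this
  have hzBsum : ∑ i ∈ Finset.range k, (z ^ g) ^ i = 0 := by
    have := hzB
    simp [hB, Polynomial.IsRoot, Polynomial.eval_finset_sum] at this
    exact this
  by_cases hzg : z ^ g = 1
  · rw [hzg] at hzBsum
    simp at hzBsum
    omega
  · have hzb : z ^ (g * k) = 1 := by
      have h := geom_sum_mul (z ^ g) k
      rw [hzBsum, zero_mul] at h
      rw [pow_mul]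
      exact (sub_eq_zero.mp h.symm)
    -- order of z divides both g*k and n hence their gcd e, and e ∣ g
    have hz0 : z ≠ 0 := by
      intro h0
      rw [h0, zero_pow hn.ne'] at hzn
      exact zero_ne_one hzn
    set e := Nat.gcd (g * k) n with he
    have hoz : orderOf z ∣ e :=
      Nat.dvd_gcd (orderOf_dvd_of_pow_eq_one hzb) (orderOf_dvd_of_pow_eq_one hzn)
    have hze : z ^ e = 1 := orderOf_dvd_iff_pow_eq_one.mp hoz
    have heg : e ∣ g := H e (Nat.gcd_dvd_right _ _) (Nat.gcd_dvd_left _ _)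
    have : z ^ g = 1 := by
      obtain ⟨t, hgt⟩ := heg
      rw [hgt, pow_mul, hze, one_pow]
    exact hzg this

lemma hfac (k : ℕ) (hk : 0 < k) : (1 : RatFunc ℚ) - q ^ k ≠ 0 := by
  have : (q : RatFunc ℚ) ^ k ≠ 1 := by
    rw [q, ← RatFunc.algebraMap_X (K := ℚ), ← map_pow, ← map_one (algebraMap (Polynomial ℚ) (RatFunc ℚ))]
    intro h
    have := RatFunc.algebraMap_injective (K := ℚ) h
    have h2 := Polynomial.X_pow_sub_C_ne_zero hk (1 : ℚ)
    rw [map_one] at h2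
    exact h2 (by rw [this]; ring)
  intro h
  exact this (sub_eq_zero.mp h).symm

lemma key_pos (n a b : ℕ) (hn : 0 < n) (ha : 0 < a) (hb : 0 < b)
    (H : ∀ e : ℕ, e ∣ n → e ∣ b → e ∣ a) :
    good n ((1 - q ^ a) / (1 - q ^ b)) := by
  set g := Nat.gcd a b with hg
  have hgpos : 0 < g := Nat.gcd_pos_of_pos_left _ ha
  have hga : g ∣ a := Nat.gcd_dvd_left _ _
  have hgb : g ∣ b := Nat.gcd_dvd_right _ _
  refine ⟨∑ i ∈ Finset.range (a / g), ((X : Polynomial ℚ) ^ g) ^ i,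
    ∑ i ∈ Finset.range (b / g), ((X : Polynomial ℚ) ^ g) ^ i,
    coprime_geom n g (b / g) hn hgpos (Nat.div_pos (Nat.le_of_dvd hb hgb) hgpos) ?_, ?_⟩
  · intro e hen heb
    rw [Nat.mul_div_cancel' hgb] at heb
    exact Nat.dvd_gcd (H e hen heb) heb
  · have hA : (∑ i ∈ Finset.range (a / g), ((X : Polynomial ℚ) ^ g) ^ i) * ((X : Polynomial ℚ) ^ g - 1)
        = X ^ a - 1 := by
      rw [geom_sum_mul, ← pow_mul, Nat.mul_div_cancel' hga]
    have hB : (∑ i ∈ Finset.range (b / g), ((X : Polynomial ℚ) ^ g) ^ i) * ((X : Polynomial ℚ) ^ g - 1)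
        = X ^ b - 1 := by
      rw [geom_sum_mul, ← pow_mul, Nat.mul_div_cancel' hgb]
    have hq : ∀ k : ℕ, (q : RatFunc ℚ) ^ k = algebraMap (Polynomial ℚ) (RatFunc ℚ) (X ^ k) := by
      intro k
      rw [q, ← RatFunc.algebraMap_X (K := ℚ), ← map_pow]
    have hc : algebraMap (Polynomial ℚ) (RatFunc ℚ) ((X : Polynomial ℚ) ^ g - 1) ≠ 0 := by
      apply RatFunc.algebraMap_ne_zero
      have := Polynomial.X_pow_sub_C_ne_zero hgpos (1 : ℚ)
      rwa [map_one] at this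
    have e1 : (1 : RatFunc ℚ) - q ^ a =
        -(algebraMap (Polynomial ℚ) (RatFunc ℚ)
          (∑ i ∈ Finset.range (a / g), ((X : Polynomial ℚ) ^ g) ^ i) *
         algebraMap (Polynomial ℚ) (RatFunc ℚ) ((X : Polynomial ℚ) ^ g - 1)) := by
      rw [← map_mul, hA, hq a, ← map_one (algebraMap (Polynomial ℚ) (RatFunc ℚ)),
        ← map_sub, ← map_neg]
      congr 1
      ring
    have e2 : (1 : RatFunc ℚ) - q ^ b =
        -(algebraMap (Polynomial ℚ) (RatFunc ℚ)
          (∑ i ∈ Finset.range (b / g), ((X : Polynomial ℚ) ^ g) ^ i) *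
         algebraMap (Polynomial ℚ) (RatFunc ℚ) ((X : Polynomial ℚ) ^ g - 1)) := by
      rw [← map_mul, hB, hq b, ← map_one (algebraMap (Polynomial ℚ) (RatFunc ℚ)),
        ← map_sub, ← map_neg]
      congr 1
      ring
    rw [e1, e2, neg_div_neg_eq, mul_div_mul_right _ _ hc]

lemma key (n : ℕ) (hn : 0 < n) (a : ℤ) (ha : a ≠ 0) (b : ℕ) (hb : 0 < b)
    (H : ∀ e : ℕ, e ∣ n → (e : ℤ) ∣ (b : ℤ) → (e : ℤ) ∣ a) :
    good n ((1 - q ^ a) / (1 - q ^ b)) := by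
  have hq0 : (q : RatFunc ℚ) ≠ 0 := by rw [q]; exact RatFunc.X_ne_zero
  rcases lt_or_gt_of_ne ha with hneg | hpos
  · -- a < 0
    set k := (-a).toNat with hkdef
    have hk : (k : ℤ) = -a := Int.toNat_of_nonneg (by omega)
    have hkpos : 0 < k := by omega
    have hsplit : (1 : RatFunc ℚ) - q ^ a = (-q ^ a) * (1 - q ^ k) := by
      have h1 : (q : RatFunc ℚ) ^ a * q ^ k = 1 := by
        rw [← zpow_natCast q k, ← zpow_add₀ hq0, hk]
        simp
      rw [neg_mul, mul_sub, mul_one, h1, neg_sub]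
    rw [hsplit, mul_div_assoc]
    apply good_mul
    · refine ⟨-1, X ^ k, (cop_X n hn).pow_left, ?_⟩
      have : (q : RatFunc ℚ) ^ a = (q ^ k)⁻¹ := by
        rw [← zpow_natCast q k, ← zpow_neg, hk]
        simp
      rw [this, q, ← RatFunc.algebraMap_X (K := ℚ), ← map_pow, map_neg, map_one]
      field_simp
    · apply key_pos n k b hn hkpos hb
      intro e hen heb
      have := H e hen (Int.natCast_dvd_natCast.mpr heb)
      have h2 : (e : ℤ) ∣ (k : ℤ) := by rw [hk]; exact dvd_neg.mpr this
      exact_mod_cast h2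
  · -- a > 0
    lift a to ℕ using hpos.le with a'
    rw [zpow_natCast]
    apply key_pos n a' b hn (by exact_mod_cast hpos) hb
    intro e hen heb
    have := H e hen (Int.natCast_dvd_natCast.mpr heb)
    exact_mod_cast this

theorem stmt_6 (n d : ℕ) (hn : 0 < n) (hd : 0 < d) (hnd : Nat.Coprime n d)
    (r : ℤ) (hrd : Int.gcd r d = 1)
    (m : ℕ) (hm : m < n) (hdm : (n : ℤ) ∣ ((d : ℤ) * m + r)) :
    ∃ A B : Polynomial ℚ, IsCoprime B (Polynomial.X ^ n - 1) ∧
      qpoch (q ^ r) d m * qpoch (q ^ (r + ((m : ℤ) + 1) * d)) d m / (qpoch (q ^ d) d m) ^ 2 =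
        algebraMap (Polynomial ℚ) (RatFunc ℚ) A / algebraMap (Polynomial ℚ) (RatFunc ℚ) B := by
  have hq0 : (q : RatFunc ℚ) ≠ 0 := by rw [q]; exact RatFunc.X_ne_zero
  -- rewrite the three Pochhammer symbols
  have e1 : qpoch (q ^ r) d m = ∏ j ∈ Finset.range m, (1 - q ^ (r + (d : ℤ) * j)) := by
    unfold qpoch
    refine Finset.prod_congr rfl fun j _ => ?_
    congr 1
    rw [← zpow_natCast q (d * j), ← zpow_add₀ hq0]
    push_cast
    ring_nf
  have e2 : qpoch (q ^ (r + ((m : ℤ) + 1) * d)) d m =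
      ∏ j ∈ Finset.range m, (1 - q ^ (r + ((m : ℤ) + 1) * d + (d : ℤ) * j)) := by
    unfold qpoch
    refine Finset.prod_congr rfl fun j _ => ?_
    congr 1
    rw [← zpow_natCast q (d * j), ← zpow_add₀ hq0]
    push_cast
    ring_nf
  have e3 : qpoch (q ^ d) d m = ∏ j ∈ Finset.range m, (1 - q ^ (d * (j + 1))) := by
    unfold qpoch
    refine Finset.prod_congr rfl fun j _ => ?_
    congr 1
    rw [← pow_add]
    congr 1
    ring
  rw [e1, e2, e3]
  show good n _
  have hrefl : ∏ j ∈ Finset.range m, ((1 : RatFunc ℚ) - q ^ (d * (m - j))) =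
      ∏ j ∈ Finset.range m, (1 - q ^ (d * (j + 1))) := by
    rw [← Finset.prod_range_reflect (fun j => (1 : RatFunc ℚ) - q ^ (d * (j + 1))) m]
    refine Finset.prod_congr rfl fun j hj => ?_
    rw [Finset.mem_range] at hj
    congr 2
    have : m - 1 - j + 1 = m - j := by omega
    rw [this]
  have hsplit : (∏ j ∈ Finset.range m, ((1 : RatFunc ℚ) - q ^ (r + (d : ℤ) * j))) *
      (∏ j ∈ Finset.range m, ((1 : RatFunc ℚ) - q ^ (r + ((m : ℤ) + 1) * d + (d : ℤ) * j))) /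
      (∏ j ∈ Finset.range m, ((1 : RatFunc ℚ) - q ^ (d * (j + 1)))) ^ 2 =
      (∏ j ∈ Finset.range m, ((1 - q ^ (r + (d : ℤ) * j)) / (1 - q ^ (d * (m - j))))) *
      (∏ j ∈ Finset.range m, ((1 - q ^ (r + ((m : ℤ) + 1) * d + (d : ℤ) * j)) / (1 - q ^ (d * (j + 1))))) := by
    rw [Finset.prod_div_distrib, Finset.prod_div_distrib, hrefl, div_mul_div_comm, ← sq]
  rw [hsplit]
  apply good_mul
  · apply good_prod
    intro j hj
    rw [Finset.mem_range] at hj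
    apply key n hn _ ?_ _ (Nat.mul_pos hd (by omega)) ?_
    · -- r + d*j ≠ 0
      intro h0
      have hnd2 : (n : ℤ) ∣ (d : ℤ) * ((m : ℤ) - j) := by
        have : (d : ℤ) * ((m : ℤ) - j) = ((d : ℤ) * m + r) - (r + (d : ℤ) * j) := by ring
        rw [this, h0, sub_zero]
        exact hdm
      have hcop : IsCoprime (n : ℤ) (d : ℤ) := by
        rw [Int.isCoprime_iff_gcd_eq_one]
        exact_mod_cast hnd
      have := hcop.dvd_of_dvd_mul_left hnd2
      have hle := Int.le_of_dvd (by omega) this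
      omega
    · intro e hen heb
      have h1 : (e : ℤ) ∣ (d : ℤ) * m + r := dvd_trans (Int.natCast_dvd_natCast.mpr hen) hdm
      have h2 : (r + (d : ℤ) * j) = ((d : ℤ) * m + r) - (d * (m - j) : ℕ) := by
        push_cast [Nat.cast_sub hj.le]
        ring
      rw [h2]
      exact dvd_sub h1 heb
  · apply good_prod
    intro j hj
    rw [Finset.mem_range] at hj
    apply key n hn _ ?_ _ (by positivity) ?_
    · intro h0
      have hnd2 : (n : ℤ) ∣ (d : ℤ) * ((j : ℤ) + 1) := by
        have : (d : ℤ) * ((j : ℤ) + 1) = -(((d : ℤ) * m + r)) + (r + ((m : ℤ) + 1) * d + (d : ℤ) * j) := by ring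
        rw [this, h0, add_zero]
        exact dvd_neg.mpr hdm
      have hcop : IsCoprime (n : ℤ) (d : ℤ) := by
        rw [Int.isCoprime_iff_gcd_eq_one]
        exact_mod_cast hnd
      have := hcop.dvd_of_dvd_mul_left hnd2
      have hle := Int.le_of_dvd (by omega) this
      omega
    · intro e hen heb
      have h1 : (e : ℤ) ∣ (d : ℤ) * m + r := dvd_trans (Int.natCast_dvd_natCast.mpr hen) hdm
      have h2 : (r + ((m : ℤ) + 1) * d + (d : ℤ) * j) = ((d : ℤ) * m + r) + (d * (j + 1) : ℕ) := by
        push_cast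
        ring
      rw [h2]
      exact dvd_add h1 heb
end

section
/- Let n, d be positive integers with gcd(n, d) = 1, let r be an integer with gcd(r, d) = 1, and let m be the unique integer with 0 ≤ m < n and d·m + r ≡ 0 (mod n). Then for every integer k with 1 ≤ k ≤ m, there exist polynomials A, B ∈ ℚ[q] with B coprime to q^n − 1 such that, in ℚ(q), (1 − q^{md+r}) / (1 − q^{dk}) = A/B. -/
open Finset Polynomial

lemma alg_X_pow_sub_one (a : ℕ) :
    algebraMap (Polynomial ℚ) (RatFunc ℚ) (Polynomial.X ^ a - 1) = q ^ a - 1 := by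
  simp [q, map_sub, map_pow, RatFunc.algebraMap_X]

lemma one_sub_q_pow_ne_zero {a : ℕ} (ha : 0 < a) : (1 : RatFunc ℚ) - q ^ a ≠ 0 := by
  have h : algebraMap (Polynomial ℚ) (RatFunc ℚ) (Polynomial.X ^ a - 1) ≠ 0 :=
    RatFunc.algebraMap_ne_zero (by simpa using Polynomial.X_pow_sub_C_ne_zero ha (1 : ℚ))
  rw [alg_X_pow_sub_one] at h
  intro hc; exact h (by linear_combination -hc)

lemma key_s7 (a b N : ℕ) (ha : 0 < a) (hb : 0 < b) (hN : 0 < N) (hna : N ∣ a) :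
    ∃ A B : Polynomial ℚ, IsCoprime B (Polynomial.X ^ N - 1) ∧
      algebraMap (Polynomial ℚ) (RatFunc ℚ) B ≠ 0 ∧
      (1 - q ^ a) / (1 - q ^ b) =
        algebraMap (Polynomial ℚ) (RatFunc ℚ) A / algebraMap (Polynomial ℚ) (RatFunc ℚ) B := by
  classical
  set D1 := a.divisors with hD1
  set D2 := b.divisors with hD2
  refine ⟨∏ i ∈ D1 \ D2, cyclotomic i ℚ, ∏ i ∈ D2 \ D1, cyclotomic i ℚ, ?_, ?_, ?_⟩
  · rw [← Polynomial.prod_cyclotomic_eq_X_pow_sub_one hN ℚ]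
    apply IsCoprime.prod_left; intro i hi
    apply IsCoprime.prod_right; intro j hj
    apply Polynomial.cyclotomic.isCoprime_rat
    rintro rfl
    have hi' := Finset.mem_sdiff.mp hi
    exact hi'.2 (Nat.mem_divisors.mpr ⟨(Nat.mem_divisors.mp hj).1.trans hna, ha.ne'⟩)
  · exact RatFunc.algebraMap_ne_zero (by
      rw [Finset.prod_ne_zero_iff]; intro i _; exact Polynomial.cyclotomic_ne_zero i ℚ)
  · have e1 : (1 : RatFunc ℚ) - q ^ a
        = - algebraMap (Polynomial ℚ) (RatFunc ℚ) (∏ i ∈ D1, cyclotomic i ℚ) := by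
      rw [hD1, Polynomial.prod_cyclotomic_eq_X_pow_sub_one ha ℚ, alg_X_pow_sub_one]; ring
    have e2 : (1 : RatFunc ℚ) - q ^ b
        = - algebraMap (Polynomial ℚ) (RatFunc ℚ) (∏ i ∈ D2, cyclotomic i ℚ) := by
      rw [hD2, Polynomial.prod_cyclotomic_eq_X_pow_sub_one hb ℚ, alg_X_pow_sub_one]; ring
    have c_ne : algebraMap (Polynomial ℚ) (RatFunc ℚ) (∏ i ∈ D1 ∩ D2, cyclotomic i ℚ) ≠ 0 := by
      apply RatFunc.algebraMap_ne_zero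
      rw [Finset.prod_ne_zero_iff]
      intro i _; exact Polynomial.cyclotomic_ne_zero i ℚ
    have s1 : (∏ i ∈ D1, cyclotomic i ℚ)
        = (∏ i ∈ D1 \ D2, cyclotomic i ℚ) * ∏ i ∈ D1 ∩ D2, cyclotomic i ℚ := by
      rw [← Finset.prod_sdiff (Finset.inter_subset_left), Finset.sdiff_inter_self_left]
    have s2 : (∏ i ∈ D2, cyclotomic i ℚ)
        = (∏ i ∈ D2 \ D1, cyclotomic i ℚ) * ∏ i ∈ D1 ∩ D2, cyclotomic i ℚ := by
      rw [Finset.inter_comm, ← Finset.prod_sdiff (Finset.inter_subset_left),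
        Finset.sdiff_inter_self_left]
    rw [e1, e2, neg_div_neg_eq, s1, s2, map_mul, map_mul,
      mul_div_mul_right _ _ c_ne]

lemma aux (x y a b : RatFunc ℚ) (hx : x ≠ 0) (hy : y ≠ 0) (hb : b ≠ 0)
    (h : (1 - x)/y = a/b) : (1 - x⁻¹)/y = (-a)/(b*x) := by
  rw [div_eq_div_iff hy hb] at h
  rw [div_eq_div_iff hy (by exact mul_ne_zero hb hx)]
  field_simp
  linear_combination -h

theorem stmt_7 (n d : ℕ) (hn : 0 < n) (hd : 0 < d) (hnd : Nat.Coprime n d)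
    (r : ℤ) (hrd : Int.gcd r d = 1)
    (m : ℕ) (hm : m < n) (hdm : (n : ℤ) ∣ ((d : ℤ) * m + r))
    (k : ℕ) (hk1 : 1 ≤ k) (hkm : k ≤ m) :
    ∃ A B : Polynomial ℚ, IsCoprime B (Polynomial.X ^ n - 1) ∧
      (1 - q ^ ((m : ℤ) * d + r)) / (1 - q ^ (d * k)) =
        algebraMap (Polynomial ℚ) (RatFunc ℚ) A / algebraMap (Polynomial ℚ) (RatFunc ℚ) B := by
  obtain ⟨t, ht⟩ := hdm
  have hs : (m : ℤ) * d + r = n * t := by linarith [ht]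
  have hb : 0 < d * k := Nat.mul_pos hd hk1
  have hq : q ≠ 0 := by simpa [q] using RatFunc.X_ne_zero (K := ℚ)
  rcases lt_trichotomy t 0 with htneg | htzero | htpos
  · -- t < 0
    set u : ℕ := n * (-t).toNat with hu
    have hu0 : 0 < u := Nat.mul_pos hn (by omega)
    have hsu : (m : ℤ) * d + r = -(u : ℤ) := by
      rw [hs, hu]; push_cast
      rw [Int.toNat_of_nonneg (by omega : (0:ℤ) ≤ -t)]; ring
    obtain ⟨A, B, hcop, hBne, hval⟩ := key_s7 u (d * k) n hu0 hb hn ⟨(-t).toNat, rfl⟩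
    refine ⟨-A, B * Polynomial.X ^ u, hcop.mul_left ?_, ?_⟩
    · exact (IsCoprime.pow_left ⟨Polynomial.X ^ (n - 1), -1, by
        rw [← pow_succ, Nat.sub_add_cancel hn]; ring⟩)
    · rw [hsu, zpow_neg, zpow_natCast, map_neg, map_mul, map_pow]
      rw [show algebraMap (Polynomial ℚ) (RatFunc ℚ) Polynomial.X = q from RatFunc.algebraMap_X]
      exact aux _ _ _ _ (pow_ne_zero _ hq) (one_sub_q_pow_ne_zero hb) hBne hval
  · -- t = 0
    exact ⟨0, 1, isCoprime_one_left, by rw [hs, htzero]; simp⟩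
  · -- t > 0
    set u : ℕ := n * t.toNat with hu
    have hu0 : 0 < u := Nat.mul_pos hn (by omega)
    have hsu : (m : ℤ) * d + r = (u : ℤ) := by
      rw [hs, hu]; push_cast
      rw [Int.toNat_of_nonneg (by omega : (0:ℤ) ≤ t)]
    obtain ⟨A, B, hcop, hBne, hval⟩ := key_s7 u (d * k) n hu0 hb hn ⟨t.toNat, rfl⟩
    exact ⟨A, B, hcop, by rw [hsu, zpow_natCast]; exact hval⟩
end

section
/- Let d be a positive integer and r an integer such that r + d·j ≠ 0 for every integer j ≥ 0. Define, for integers k ≥ 0 and l ≥ 0, F(k, l) := (−1)^{k+l} · q^{d·(k−l+1)(k−l)/2 − r·k + r·l} · [2dk + r] · (q^r; q^d)_k^2 · (q^r; q^d)_{k+l} / ( (q^d; q^d)_k^2 · (q^d; q^d)_{k−l} · (q^r; q^d)_l^2 ) and G(k, l) := (−1)^{k+l} · q^{d·(k−l+1)(k−l)/2 − r·k + r·l} · (q^r; q^d)_k^2 · (q^r; q^d)_{k+l−1} / ( (1 − q) · (q^d; q^d)_{k−1}^2 · (q^d; q^d)_{k−l} · (q^r; q^d)_l^2 ), with the convention that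 1/(q^d; q^d)_j = 0 for every negative integer j. Then for every integer m ≥ 1, ∑_{k=0}^{m} F(k, 0) = F(m, m) + ∑_{k=1}^{m} G(m+1, k) in ℚ(q). -/
open Finset Polynomial

/-- Reciprocal of `(q^d; q^d)_j` for an integer index `j`, with the convention that
`1/(q^d; q^d)_j = 0` for negative `j`. -/
noncomputable def qdpochInv (d : ℕ) (j : ℤ) : RatFunc ℚ :=
  if 0 ≤ j then (qpoch (q ^ d) d j.toNat)⁻¹ else 0

/-- The function `F(k, l)` of the `q`-WZ pair. -/
noncomputable def F (d : ℕ) (r : ℤ) (k l : ℕ) : RatFunc ℚ :=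
  (-1 : RatFunc ℚ) ^ (k + l) *
    q ^ ((d : ℤ) * (((k : ℤ) - l + 1) * ((k : ℤ) - l)) / 2 - r * k + r * l) *
    qint (2 * (d : ℤ) * k + r) * (qpoch (q ^ r) d k) ^ 2 * qpoch (q ^ r) d (k + l) *
    ((qpoch (q ^ d) d k) ^ 2)⁻¹ * qdpochInv d ((k : ℤ) - l) * ((qpoch (q ^ r) d l) ^ 2)⁻¹

/-- The function `G(k, l)` of the `q`-WZ pair. -/
noncomputable def G (d : ℕ) (r : ℤ) (k l : ℕ) : RatFunc ℚ :=
  (-1 : RatFunc ℚ) ^ (k + l) *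
    q ^ ((d : ℤ) * (((k : ℤ) - l + 1) * ((k : ℤ) - l)) / 2 - r * k + r * l) *
    (qpoch (q ^ r) d k) ^ 2 * qpoch (q ^ r) d (k + l - 1) *
    (1 - q)⁻¹ * (qdpochInv d ((k : ℤ) - 1)) ^ 2 * qdpochInv d ((k : ℤ) - l) *
    ((qpoch (q ^ r) d l) ^ 2)⁻¹

lemma q_ne_zero : q ≠ 0 := RatFunc.X_ne_zero

lemma q_npow_ne_one {n : ℕ} (hn : n ≠ 0) : q ^ n ≠ 1 := by
  intro h
  have h2 : (Polynomial.X : ℚ[X]) ^ n = 1 := by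
    apply IsFractionRing.injective ℚ[X] (RatFunc ℚ)
    simpa [q, map_pow, RatFunc.algebraMap_X] using h
  have := congrArg (Polynomial.eval 0) h2
  simp [zero_pow hn] at this

lemma q_zpow_ne_one {n : ℤ} (hn : n ≠ 0) : q ^ n ≠ 1 := by
  rcases lt_or_gt_of_ne hn with h | h
  · intro hq
    have h1 : q ^ (-n) = 1 := by rw [zpow_neg, hq, inv_one]
    rw [show -n = ((-n).toNat : ℤ) by omega, zpow_natCast] at h1
    exact q_npow_ne_one (by omega) h1
  · intro hq
    rw [show n = (n.toNat : ℤ) by omega, zpow_natCast] at hq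
    exact q_npow_ne_one (by omega) hq

lemma one_sub_q_zpow_ne {n : ℤ} (hn : n ≠ 0) : 1 - q ^ n ≠ 0 :=
  sub_ne_zero.mpr fun h => q_zpow_ne_one hn h.symm

lemma one_sub_q_ne : (1 : RatFunc ℚ) - q ≠ 0 := by
  have := one_sub_q_zpow_ne (n := 1) one_ne_zero
  simpa using this

lemma qpoch_succ (a : RatFunc ℚ) (d k : ℕ) :
    qpoch a d (k + 1) = qpoch a d k * (1 - a * q ^ (d * k)) := Finset.prod_range_succ _ _

lemma qpoch_zero (a : RatFunc ℚ) (d : ℕ) : qpoch a d 0 = 1 := Finset.prod_range_zero _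

lemma factor_r_ne_zero {d : ℕ} {r : ℤ} (hr : ∀ j : ℕ, r + (d : ℤ) * j ≠ 0) (j : ℕ) :
    (1 : RatFunc ℚ) - q ^ r * q ^ (d * j) ≠ 0 := by
  rw [← zpow_natCast q (d * j), ← zpow_add₀ q_ne_zero]
  exact one_sub_q_zpow_ne (by push_cast; exact hr j)

lemma factor_d_ne_zero {d : ℕ} (hd : 0 < d) (j : ℕ) :
    (1 : RatFunc ℚ) - q ^ d * q ^ (d * j) ≠ 0 := by
  rw [← pow_add, ← zpow_natCast q (d + d * j)]
  exact one_sub_q_zpow_ne (by positivity)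

lemma qpoch_r_ne_zero {d : ℕ} {r : ℤ} (hr : ∀ j : ℕ, r + (d : ℤ) * j ≠ 0) (l : ℕ) :
    qpoch (q ^ r) d l ≠ 0 := by
  unfold qpoch
  exact Finset.prod_ne_zero_iff.mpr fun j _ => factor_r_ne_zero hr j

lemma qpoch_d_ne_zero {d : ℕ} (hd : 0 < d) (l : ℕ) :
    qpoch (q ^ d) d l ≠ 0 := by
  unfold qpoch
  exact Finset.prod_ne_zero_iff.mpr fun j _ => factor_d_ne_zero hd j

lemma qdpochInv_natCast (d t : ℕ) : qdpochInv d (t : ℤ) = (qpoch (q ^ d) d t)⁻¹ := by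
  simp [qdpochInv]

lemma qdpochInv_neg {d : ℕ} {j : ℤ} (h : j < 0) : qdpochInv d j = 0 :=
  if_neg (not_le.mpr h)

lemma qint_eq (z : ℤ) : qint z = (1 - q ^ z) * (1 - q)⁻¹ := div_eq_mul_inv _ _

lemma half_step (c a : ℤ) : c * ((a + 1 + 1) * (a + 1)) / 2 = c * ((a + 1) * a) / 2 + c * (a + 1) := by
  obtain ⟨s, hs⟩ := Int.even_mul_succ_self a
  have h1 : (a + 1 + 1) * (a + 1) = 2 * (s + (a + 1)) := by linear_combination hs
  have h2 : (a + 1) * a = 2 * s := by linear_combination hs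
  rw [h1, h2, show c * (2 * (s + (a + 1))) = 2 * (c * s + c * (a + 1)) by ring,
    show c * (2 * s) = 2 * (c * s) by ring,
    Int.mul_ediv_cancel_left _ two_ne_zero, Int.mul_ediv_cancel_left _ two_ne_zero]

lemma F_eq_zero (d : ℕ) (r : ℤ) {n l : ℕ} (h : n < l) : F d r n l = 0 := by
  unfold F
  rw [qdpochInv_neg (show (n : ℤ) - l < 0 by omega)]
  ring

lemma G_eq_zero (d : ℕ) (r : ℤ) {n l : ℕ} (h : n < l) : G d r n l = 0 := by
  unfold G
  rw [qdpochInv_neg (show (n : ℤ) - l < 0 by omega)]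
  ring

lemma G_zero_left (d : ℕ) (r : ℤ) (l : ℕ) : G d r 0 l = 0 := by
  unfold G
  rw [qdpochInv_neg (show ((0 : ℕ) : ℤ) - 1 < 0 by norm_num)]
  ring

lemma F_formula (d : ℕ) (r : ℤ) {n l : ℕ} (h : l ≤ n) :
    F d r n l = (-1 : RatFunc ℚ) ^ (n + l) *
      q ^ ((d : ℤ) * ((((n - l : ℕ) : ℤ) + 1) * ((n - l : ℕ) : ℤ)) / 2 - r * n + r * l) *
      qint (2 * (d : ℤ) * n + r) * (qpoch (q ^ r) d n) ^ 2 * qpoch (q ^ r) d (n + l) *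
      ((qpoch (q ^ d) d n) ^ 2)⁻¹ * (qpoch (q ^ d) d (n - l))⁻¹ *
      ((qpoch (q ^ r) d l) ^ 2)⁻¹ := by
  have h1 : (n : ℤ) - l = ((n - l : ℕ) : ℤ) := by omega
  unfold F
  rw [h1, qdpochInv_natCast]

lemma G_formula (d : ℕ) (r : ℤ) {n l : ℕ} (h0 : 1 ≤ n) (h : l ≤ n) :
    G d r n l = (-1 : RatFunc ℚ) ^ (n + l) *
      q ^ ((d : ℤ) * ((((n - l : ℕ) : ℤ) + 1) * ((n - l : ℕ) : ℤ)) / 2 - r * n + r * l) *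
      (qpoch (q ^ r) d n) ^ 2 * qpoch (q ^ r) d (n + l - 1) *
      (1 - q)⁻¹ * ((qpoch (q ^ d) d (n - 1))⁻¹) ^ 2 * (qpoch (q ^ d) d (n - l))⁻¹ *
      ((qpoch (q ^ r) d l) ^ 2)⁻¹ := by
  have h1 : (n : ℤ) - l = ((n - l : ℕ) : ℤ) := by omega
  have h2 : (n : ℤ) - 1 = ((n - 1 : ℕ) : ℤ) := by omega
  unfold G
  rw [h1, h2, qdpochInv_natCast, qdpochInv_natCast]

lemma diag (d : ℕ) (hd : 0 < d) (r : ℤ) (hr : ∀ j : ℕ, r + (d : ℤ) * j ≠ 0) (n : ℕ) :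
    F d r n n = G d r (n + 1) (n + 1) := by
  rw [F_formula d r (le_refl n), G_formula d r (by omega) (le_refl (n + 1))]
  rw [Nat.sub_self, Nat.sub_self, Nat.add_sub_cancel]
  rw [show n + 1 + (n + 1) - 1 = n + n + 1 by omega]
  rw [show (d : ℤ) * ((((0 : ℕ) : ℤ) + 1) * ((0 : ℕ) : ℤ)) / 2 - r * (n : ℕ) + r * (n : ℕ) = 0 by
    push_cast; simp]
  rw [show (d : ℤ) * ((((0 : ℕ) : ℤ) + 1) * ((0 : ℕ) : ℤ)) / 2 - r * ((n + 1 : ℕ) : ℤ) +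
      r * ((n + 1 : ℕ) : ℤ) = 0 by push_cast; simp]
  rw [zpow_zero]
  rw [qint_eq]
  rw [show 2 * (d : ℤ) * (n : ℕ) + r = ((d * n : ℕ) : ℤ) + ((d * n : ℕ) : ℤ) + r by
    push_cast; ring]
  rw [show q ^ (((d * n : ℕ) : ℤ) + ((d * n : ℕ) : ℤ) + r) = q ^ (d * n) * q ^ (d * n) * q ^ r by
    rw [zpow_add₀ q_ne_zero, zpow_add₀ q_ne_zero, zpow_natCast]]
  rw [qpoch_zero, qpoch_succ (q ^ r) d (n + n), qpoch_succ (q ^ r) d n]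
  rw [show n + 1 + (n + 1) = n + n + 2 by omega]
  rw [show ((-1 : RatFunc ℚ) ^ (n + n) : RatFunc ℚ) = 1 from Even.neg_one_pow ⟨n, rfl⟩]
  rw [show ((-1 : RatFunc ℚ) ^ (n + n + 2) : RatFunc ℚ) = 1 from Even.neg_one_pow ⟨n + 1, by ring⟩]
  have h1 : qpoch (q ^ r) d n ≠ 0 := qpoch_r_ne_zero hr n
  have h2 : qpoch (q ^ d) d n ≠ 0 := qpoch_d_ne_zero hd n
  have h3 : (1 : RatFunc ℚ) - q ^ r * q ^ (d * n) ≠ 0 := factor_r_ne_zero hr n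
  have h4 : (1 : RatFunc ℚ) - q ≠ 0 := one_sub_q_ne
  have h3' : (1 : RatFunc ℚ) - q ^ (d * n) * q ^ r ≠ 0 := by rw [mul_comm]; exact h3
  field_simp
  ring


lemma scalar {K : Type*} [Field K] (S W A B C X V P1 P2 P3 Q1 Q2 : K)
    (hX : X ≠ 0) (hV : V ≠ 0) (hP1 : P1 ≠ 0) (hQ1 : Q1 ≠ 0) (hQ2 : Q2 ≠ 0)
    (hf : 1 - X * A ≠ 0) (hg1 : 1 - C * B ≠ 0) (hg2 : 1 - C * (A * B) ≠ 0) :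
    S * W * (B * C) * (1 - A * B * C * (A * B * C) * X) * P2 ^ 2 * P3 /
      (X * V * (Q2 * (1 - C * (A * B))) ^ 2 * (Q1 * (1 - C * B)) * P1 ^ 2)
    + S * W * (1 - A * B * C * (A * B * C) * X) * P2 ^ 2 * (P3 * (1 - X * (A * A * B * C))) /
      (V * (Q2 * (1 - C * (A * B))) ^ 2 * Q1 * (P1 * (1 - X * A)) ^ 2)
    = S * W * (B * C) * (P2 * (1 - X * (A * B * C))) ^ 2 * (P3 * (1 - X * (A * A * B * C))) /
      (X * V * (Q2 * (1 - C * (A * B))) ^ 2 * (Q1 * (1 - C * B)) * (P1 * (1 - X * A)) ^ 2)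
    + S * W * P2 ^ 2 * P3 / (V * Q2 ^ 2 * Q1 * (P1 * (1 - X * A)) ^ 2) := by
  have hD1 : X * V * (Q2 * (1 - C * (A * B))) ^ 2 * (Q1 * (1 - C * B)) * P1 ^ 2 ≠ 0 := by
    apply_rules [mul_ne_zero, pow_ne_zero]
  have hD2 : V * (Q2 * (1 - C * (A * B))) ^ 2 * Q1 * (P1 * (1 - X * A)) ^ 2 ≠ 0 := by
    apply_rules [mul_ne_zero, pow_ne_zero]
  have hD3 : X * V * (Q2 * (1 - C * (A * B))) ^ 2 * (Q1 * (1 - C * B)) * (P1 * (1 - X * A)) ^ 2 ≠ 0 := by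
    apply_rules [mul_ne_zero, pow_ne_zero]
  have hD4 : V * Q2 ^ 2 * Q1 * (P1 * (1 - X * A)) ^ 2 ≠ 0 := by
    apply_rules [mul_ne_zero, pow_ne_zero]
  rw [div_add_div _ _ hD1 hD2, div_add_div _ _ hD3 hD4,
    div_eq_div_iff (mul_ne_zero hD1 hD2) (mul_ne_zero hD3 hD4)]
  ring

set_option maxHeartbeats 4000000 in
lemma wz_main (d : ℕ) (hd : 0 < d) (r : ℤ) (hr : ∀ j : ℕ, r + (d : ℤ) * j ≠ 0) (k t : ℕ) :
    F d r (k + t + 1) k - F d r (k + t + 1) (k + 1) =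
      G d r (k + t + 1 + 1) (k + 1) - G d r (k + t + 1) (k + 1) := by
  rw [F_formula d r (show k ≤ k + t + 1 by omega),
    F_formula d r (show k + 1 ≤ k + t + 1 by omega),
    G_formula d r (show 1 ≤ k + t + 1 + 1 by omega) (show k + 1 ≤ k + t + 1 + 1 by omega),
    G_formula d r (show 1 ≤ k + t + 1 by omega) (show k + 1 ≤ k + t + 1 by omega)]
  rw [show k + t + 1 - k = t + 1 by omega,
    show k + t + 1 - (k + 1) = t by omega,
    show k + t + 1 + 1 - (k + 1) = t + 1 by omega,
    show k + t + 1 + 1 - 1 = k + t + 1 by omega,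
    show k + t + 1 + 1 + (k + 1) - 1 = k + t + 1 + k + 1 by omega,
    show k + t + 1 + (k + 1) - 1 = k + t + 1 + k by omega,
    show k + t + 1 - 1 = k + t by omega,
    show k + t + 1 + 1 + (k + 1) = k + t + 1 + k + 1 + 1 by omega,
    show k + t + 1 + (k + 1) = k + t + 1 + k + 1 by omega]
  -- exponent arithmetic
  obtain ⟨s, hs⟩ := Int.even_mul_succ_self (t : ℤ)
  have e2val : (d : ℤ) * ((((t : ℕ) : ℤ) + 1) * ((t : ℕ) : ℤ)) / 2 = (d : ℤ) * s := by
    rw [show (((t : ℕ) : ℤ) + 1) * ((t : ℕ) : ℤ) = 2 * s by linear_combination hs,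
      show (d : ℤ) * (2 * s) = 2 * ((d : ℤ) * s) by ring,
      Int.mul_ediv_cancel_left _ two_ne_zero]
  have e1val : (d : ℤ) * ((((t + 1 : ℕ) : ℤ) + 1) * ((t + 1 : ℕ) : ℤ)) / 2 =
      (d : ℤ) * s + (d : ℤ) * (((t : ℕ) : ℤ) + 1) := by
    rw [show (((t + 1 : ℕ) : ℤ) + 1) * ((t + 1 : ℕ) : ℤ) = 2 * (s + (((t : ℕ) : ℤ) + 1)) by
        push_cast; linear_combination hs,
      show (d : ℤ) * (2 * (s + (((t : ℕ) : ℤ) + 1))) =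
        2 * ((d : ℤ) * s + (d : ℤ) * (((t : ℕ) : ℤ) + 1)) by ring,
      Int.mul_ediv_cancel_left _ two_ne_zero]
  have h1 : (d : ℤ) * ((((t + 1 : ℕ) : ℤ) + 1) * ((t + 1 : ℕ) : ℤ)) / 2 -
      r * ((k + t + 1 : ℕ) : ℤ) + r * ((k : ℕ) : ℤ) =
      ((d : ℤ) * ((((t : ℕ) : ℤ) + 1) * ((t : ℕ) : ℤ)) / 2 -
        r * ((k + t + 1 : ℕ) : ℤ) + r * ((k + 1 : ℕ) : ℤ)) + ((d * (t + 1) : ℕ) : ℤ) + (-r) := by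
    rw [e1val, e2val]; push_cast; ring
  have h3 : (d : ℤ) * ((((t + 1 : ℕ) : ℤ) + 1) * ((t + 1 : ℕ) : ℤ)) / 2 -
      r * ((k + t + 1 + 1 : ℕ) : ℤ) + r * ((k + 1 : ℕ) : ℤ) =
      ((d : ℤ) * ((((t : ℕ) : ℤ) + 1) * ((t : ℕ) : ℤ)) / 2 -
        r * ((k + t + 1 : ℕ) : ℤ) + r * ((k + 1 : ℕ) : ℤ)) + ((d * (t + 1) : ℕ) : ℤ) + (-r) := by
    rw [e1val, e2val]; push_cast; ring
  have hsplit : q ^ (((d : ℤ) * ((((t : ℕ) : ℤ) + 1) * ((t : ℕ) : ℤ)) / 2 -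
        r * ((k + t + 1 : ℕ) : ℤ) + r * ((k + 1 : ℕ) : ℤ)) + ((d * (t + 1) : ℕ) : ℤ) + (-r)) =
      q ^ ((d : ℤ) * ((((t : ℕ) : ℤ) + 1) * ((t : ℕ) : ℤ)) / 2 -
        r * ((k + t + 1 : ℕ) : ℤ) + r * ((k + 1 : ℕ) : ℤ)) * q ^ (d * (t + 1)) * (q ^ r)⁻¹ := by
    rw [zpow_add₀ q_ne_zero, zpow_add₀ q_ne_zero, zpow_natCast, zpow_neg]
  rw [h1, h3, hsplit]
  -- q-integer
  rw [qint_eq]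
  rw [show 2 * (d : ℤ) * ((k + t + 1 : ℕ) : ℤ) + r =
    ((d * (k + t + 1) : ℕ) : ℤ) + ((d * (k + t + 1) : ℕ) : ℤ) + r by push_cast; ring]
  rw [show q ^ (((d * (k + t + 1) : ℕ) : ℤ) + ((d * (k + t + 1) : ℕ) : ℤ) + r) =
      q ^ (d * (k + t + 1)) * q ^ (d * (k + t + 1)) * q ^ r by
    rw [zpow_add₀ q_ne_zero, zpow_add₀ q_ne_zero, zpow_natCast]]
  -- peel products
  rw [qpoch_succ (q ^ r) d (k + t + 1 + k), qpoch_succ (q ^ r) d k,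
    qpoch_succ (q ^ r) d (k + t + 1), qpoch_succ (q ^ d) d t, qpoch_succ (q ^ d) d (k + t)]
  -- signs
  simp only [pow_succ]
  -- clear denominators and finish
  have hq : (1 : RatFunc ℚ) - q ≠ 0 := one_sub_q_ne
  have hX : q ^ r ≠ 0 := zpow_ne_zero r q_ne_zero
  have hPk : qpoch (q ^ r) d k ≠ 0 := qpoch_r_ne_zero hr k
  have hPn : qpoch (q ^ r) d (k + t + 1) ≠ 0 := qpoch_r_ne_zero hr _
  have hPnk : qpoch (q ^ r) d (k + t + 1 + k) ≠ 0 := qpoch_r_ne_zero hr _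
  have hPdt : qpoch (q ^ d) d t ≠ 0 := qpoch_d_ne_zero hd t
  have hPdkt : qpoch (q ^ d) d (k + t) ≠ 0 := qpoch_d_ne_zero hd (k + t)
  have hf3 : (1 : RatFunc ℚ) - q ^ r * q ^ (d * k) ≠ 0 := factor_r_ne_zero hr k
  have hg1 : (1 : RatFunc ℚ) - q ^ d * q ^ (d * t) ≠ 0 := factor_d_ne_zero hd t
  have hg2 : (1 : RatFunc ℚ) - q ^ d * (q ^ (d * k) * q ^ (d * t)) ≠ 0 := by
    rw [← pow_add, show d * k + d * t = d * (k + t) by ring]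
    exact factor_d_ne_zero hd (k + t)
  rw [show d * (k + t) = d * k + d * t by ring,
    show d * (t + 1) = d * t + d by ring,
    show d * (k + t + 1) = d * k + d * t + d by ring,
    show d * (k + t + 1 + k) = d * k + d * k + d * t + d by ring]
  simp only [pow_add]
  set X := q ^ r with hXdef
  set W := q ^ ((d : ℤ) * ((((t : ℕ) : ℤ) + 1) * ((t : ℕ) : ℤ)) / 2 -
    r * ((k + t + 1 : ℕ) : ℤ) + r * ((k + 1 : ℕ) : ℤ)) with hWdef
  set A := q ^ (d * k) with hAdef
  set B := q ^ (d * t) with hBdef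
  set C := q ^ d with hCdef
  set V := 1 - q with hVdef
  set P1 := qpoch X d k with hP1def
  set P2 := qpoch X d (k + t + 1) with hP2def
  set P3 := qpoch X d (k + t + 1 + k) with hP3def
  set Q1 := qpoch C d t with hQ1def
  set Q2 := qpoch C d (k + t) with hQ2def
  clear_value X W A B C V P1 P2 P3 Q1 Q2
  have SC := scalar ((-1 : RatFunc ℚ) ^ k * (-1) ^ t * (-1) ^ 1 * (-1) ^ k)
    W A B C X V P1 P2 P3 Q1 Q2 hX hq hPk hPdt hPdkt hf3 hg1 hg2
  simp only [div_eq_mul_inv, mul_inv, mul_pow, ← inv_pow] at SC ⊢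
  linear_combination SC

lemma wz (d : ℕ) (hd : 0 < d) (r : ℤ) (hr : ∀ j : ℕ, r + (d : ℤ) * j ≠ 0) (n k : ℕ) :
    F d r n k - F d r n (k + 1) = G d r (n + 1) (k + 1) - G d r n (k + 1) := by
  rcases Nat.lt_trichotomy n k with h | h | h
  · rw [F_eq_zero d r h, F_eq_zero d r (by omega), G_eq_zero d r (by omega),
      G_eq_zero d r (by omega)]
  · subst h
    rw [F_eq_zero d r (by omega : n < n + 1), G_eq_zero d r (by omega : n < n + 1),
      sub_zero, sub_zero]
    exact diag d hd r hr n
  · obtain ⟨t, rfl⟩ : ∃ t, n = k + t + 1 := ⟨n - k - 1, by omega⟩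
    exact wz_main d hd r hr k t

theorem stmt_13 (d : ℕ) (hd : 0 < d) (r : ℤ) (hr : ∀ j : ℕ, r + (d : ℤ) * j ≠ 0)
    (m : ℕ) (hm : 1 ≤ m) :
    ∑ k ∈ Finset.range (m + 1), F d r k 0 =
      F d r m m + ∑ k ∈ Finset.Icc 1 m, G d r (m + 1) k := by
  have key : ∀ k : ℕ,
      (∑ n ∈ Finset.range (m + 1), F d r n k) - (∑ n ∈ Finset.range (m + 1), F d r n (k + 1)) =
        G d r (m + 1) (k + 1) := by
    intro k
    rw [← Finset.sum_sub_distrib]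
    calc ∑ n ∈ Finset.range (m + 1), (F d r n k - F d r n (k + 1))
        = ∑ n ∈ Finset.range (m + 1), (G d r (n + 1) (k + 1) - G d r n (k + 1)) :=
          Finset.sum_congr rfl fun n _ => wz d hd r hr n k
      _ = G d r (m + 1) (k + 1) - G d r 0 (k + 1) :=
          Finset.sum_range_sub (fun n => G d r n (k + 1)) (m + 1)
      _ = G d r (m + 1) (k + 1) := by rw [G_zero_left, sub_zero]
  have tel : (∑ n ∈ Finset.range (m + 1), F d r n 0) - (∑ n ∈ Finset.range (m + 1), F d r n m) =
      ∑ k ∈ Finset.range m, G d r (m + 1) (k + 1) := by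
    rw [← Finset.sum_range_sub' (fun k => ∑ n ∈ Finset.range (m + 1), F d r n k) m]
    exact Finset.sum_congr rfl fun k _ => key k
  have last : ∑ n ∈ Finset.range (m + 1), F d r n m = F d r m m := by
    rw [Finset.sum_range_succ, Finset.sum_eq_zero fun n hn =>
      F_eq_zero d r (Finset.mem_range.mp hn), zero_add]
  have icc : ∑ k ∈ Finset.Icc 1 m, G d r (m + 1) k =
      ∑ k ∈ Finset.range m, G d r (m + 1) (k + 1) := by
    rw [← Finset.Ico_add_one_right_eq_Icc, Finset.sum_Ico_eq_sum_range]
    simp [add_comm]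
  linear_combination tel + last - icc
end
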